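/- Suppose V admits a stream function H and the swirls of V have uniformly bounded size M for some M > 0. Let S₁ and S₂ be two distinct cells. Then exactly one of the following holds: (1) S₁ ∩ S₂ = ∂S₁ ∩ ∂S₂; (2) there exists a closed orbit ξ such that S₁ ⊆ R_ξ ⊆ S₂° or S₂ ⊆ R_ξ ⊆ S₁°. -/

import Mathlib

open MeasureTheory Filter Topology Set Metric Bornology

noncomputable section

/-- The plane `ℝ²` with the Euclidean norm. -/
abbrev E2 : Type := EuclideanSpace ℝ (Fin 2)

/-- The vector of `ℝ²` with integer coordinates `k`. -/
def intVec (k : Fin 2 → ℤ) : E2 := WithLp.toLp 2 (fun i => (k i : ℝ))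

/-- `ℤ²`-periodicity of a map on `ℝ²`. -/
def ZPeriodic {α : Type*} (V : E2 → α) : Prop :=
  ∀ (x : E2) (k : Fin 2 → ℤ), V (x + intVec k) = V x

/-- The stagnation set `Γ = {x | V x = 0}`. -/
def Stag (V : E2 → E2) : Set E2 := {x | V x = 0}

/-- `ξ` is an orbit of the flow `V`. -/
def IsOrbit (V : E2 → E2) (ξ : ℝ → E2) : Prop := ∀ t : ℝ, HasDerivAt ξ (V (ξ t)) t

/-- `ξ` is the orbit of `V` passing through `x` at time `0`. -/
def IsOrbitThrough (V : E2 → E2) (ξ : ℝ → E2) (x : E2) : Prop := IsOrbit V ξ ∧ ξ 0 = x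

/-- closed orbit. -/
def IsClosedOrbit (V : E2 → E2) (ξ : ℝ → E2) : Prop :=
  IsOrbit V ξ ∧ ∃ T > (0:ℝ), ξ T = ξ 0

/-- non-contractible periodic orbit: `ξ T − ξ 0 ∈ ℤ² ∖ {0}` for some `T > 0`. -/
def IsNoncontractibleOrbit (V : E2 → E2) (ξ : ℝ → E2) : Prop :=
  IsOrbit V ξ ∧ ∃ T > (0:ℝ), ∃ k : Fin 2 → ℤ, k ≠ 0 ∧ ξ T - ξ 0 = intVec k

/-- an orbit asymptotic to the stagnation set: `dist(ξ t, Γ) → 0` as `t → ±∞`. -/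
def AsympToStag (V : E2 → E2) (ξ : ℝ → E2) : Prop :=
  Tendsto (fun t => infDist (ξ t) (Stag V)) atTop (nhds 0) ∧
  Tendsto (fun t => infDist (ξ t) (Stag V)) atBot (nhds 0)

/-- the closed region enclosed by a curve with image `J`: the complement of the
unbounded connected component of `ℝ² ∖ J`. -/
def encl (J : Set E2) : Set E2 :=
  J ∪ {x | x ∉ J ∧ IsBounded (connectedComponentIn Jᶜ x)}

/-- the swirls (closed orbits) of `V` have size uniformly bounded by `M`. -/
def SwirlBound (V : E2 → E2) (M : ℝ) : Prop :=
  ∀ ξ : ℝ → E2, IsClosedOrbit V ξ → diam (range ξ) ≤ M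

/-- a set is invariant under the flow of `V`. -/
def FlowInvariant (V : E2 → E2) (E : Set E2) : Prop :=
  ∀ x ∈ E, ∀ ξ : ℝ → E2, IsOrbitThrough V ξ x → range ξ ⊆ E

/-- a cell of the flow `V`. -/
def IsCell (V : E2 → E2) (S : Set E2) : Prop :=
  IsClosed S ∧ ∃ ξ : ℕ → ℝ → E2,
    (∀ m, IsClosedOrbit V (ξ m)) ∧
    (∀ m, encl (range (ξ m)) ⊂ encl (range (ξ (m+1)))) ∧
    S = closure (⋃ m, encl (range (ξ m))) ∧
    (frontier S ∩ Stag V).Nonempty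

/-- a maximal cell. -/
def IsMaximalCell (V : E2 → E2) (S : Set E2) : Prop :=
  IsCell V S ∧ ∀ S' : Set E2, IsCell V S' → ¬ S ⊂ S'

/-- `H` is a stream function for `V`: `ℤ²`-periodic, differentiable with Lipschitz
gradient, and `V = (−H_{x₂}, H_{x₁})`. -/
def IsStreamFunction (V : E2 → E2) (H : E2 → ℝ) : Prop :=
  ZPeriodic H ∧ Differentiable ℝ H ∧
  (∃ L : NNReal, LipschitzWith L (fun x => gradient H x)) ∧
  (∀ x : E2, V x 0 = - fderiv ℝ H x (EuclideanSpace.single 1 1) ∧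
             V x 1 = fderiv ℝ H x (EuclideanSpace.single 0 1))

/-- an `A`-admissible control path on `[0,T]`: Lipschitz with
`|γ' + A·V(γ)| ≤ 1` a.e. on `[0,T]`. -/
def IsAdmissible (V : E2 → E2) (A T : ℝ) (γ : ℝ → E2) : Prop :=
  (∃ L : NNReal, LipschitzOnWith L γ (Icc 0 T)) ∧
  ∀ᵐ t ∂(volume : Measure ℝ), t ∈ Icc (0:ℝ) T →
    ∃ g : E2, HasDerivAt γ g t ∧ ‖g + A • V (γ t)‖ ≤ 1

/-- turbulent flame speed via the control representation of the inviscid G-equation. -/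
def sT (V : E2 → E2) (p : E2) (A : ℝ) : ℝ :=
  limsup (fun t : ℝ =>
    (1 / t) * sSup {r : ℝ | ∃ γ : ℝ → E2, IsAdmissible V A t γ ∧ γ 0 = 0 ∧
      r = - (inner ℝ p (γ t) : ℝ)}) atTop

/-- `β₊` associated to the transversal family `η`. -/
def betaPlus (H : E2 → ℝ) (η : ℝ → ℝ → E2) : ℝ :=
  sInf ((fun t => H (η t 1)) '' Icc (-1:ℝ) 1)

/-- `β₋` associated to the transversal family `η`. -/
def betaMinus (H : E2 → ℝ) (η : ℝ → ℝ → E2) : ℝ :=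
  sSup ((fun t => H (η t (-1))) '' Icc (-1:ℝ) 1)

/-- `U_x = Φ((−1,1)×(β₋,β₊))`. -/
def Uset (Φ : ℝ → ℝ → E2) (a b : ℝ) : Set E2 := image2 Φ (Ioo (-1:ℝ) 1) (Ioo a b)

/-- the transversal family `η` through the orbit `ξ`: `η t` is the gradient flow
of `H` with `η t 0 = ξ t`. -/
def IsTransversalFamily (H : E2 → ℝ) (ξ : ℝ → E2) (η : ℝ → ℝ → E2) : Prop :=
  ∀ t : ℝ, η t 0 = ξ t ∧ ∀ s : ℝ, HasDerivAt (η t) (gradient H (η t s)) s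

/-- The defining property of the local coordinate map `Φ` on a rectangle
`T × B`: `Φ t β` is the (unique) point of the transversal curve `η t` at level
`H = β`. -/
def IsPhiMap (H : E2 → ℝ) (η : ℝ → ℝ → E2) (Φ : ℝ → ℝ → E2) (T B : Set ℝ) : Prop :=
  ∀ t ∈ T, ∀ β ∈ B, H (Φ t β) = β ∧ ∃ s : ℝ, Φ t β = η t s

/-! Distinct closed orbits are disjoint by uniqueness of solutions. For disjoint compact connected
curves `J`, `J'` in the plane, a component of `ℝ² ∖ J` avoiding `J'` and a component of `ℝ² ∖ J'`
avoiding `J` that share a point coincide, so their common frontier lies in `J ∩ J' = ∅` and the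
component would be clopen, which is absurd. Hence the enclosures of two closed orbits are
disjoint or nested, and a strictly smaller one lies in the interior of the larger. If the
interior of `S₁` meets `S₂`, the orbits exhausting `S₁` and `S₂` are therefore eventually
pairwise comparable; as `S₁ ≠ S₂`, neither chain is cofinal in the other, so some orbit of one
chain encloses the whole other cell. Conversely, such an orbit puts one cell into the interior of
the other. -/

theorem iUnion_subset_iUnion_of_eventually_comparable {α : Type*} {R₁ R₂ : ℕ → Set α}
    (hR₁ : Monotone R₁) (hR₂ : Monotone R₂) {k₀ m₀ : ℕ}
    (hcomp : ∀ k ≥ k₀, ∀ m ≥ m₀, R₁ k ⊆ R₂ m ∨ R₂ m ⊆ R₁ k) (hcof : ∀ k, ∃ m, ¬ R₂ m ⊆ R₁ k) :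
    ⋃ k, R₁ k ⊆ ⋃ m, R₂ m := by
  refine iUnion_subset fun k => ?_
  obtain ⟨m, hm⟩ := hcof (max k k₀)
  rcases hcomp (max k k₀) (le_max_right _ _) (max m m₀) (le_max_right _ _) with h | h
  · exact (hR₁ (le_max_left _ _)).trans (h.trans (subset_iUnion R₂ _))
  · exact (hm ((hR₂ (le_max_left _ _)).trans h)).elim

section Topology

variable {X : Type*} [TopologicalSpace X]

theorem frontier_connectedComponentIn_subset_compl [LocallyConnectedSpace X] {U : Set X}
    (hU : IsOpen U) (x : X) :
    frontier (connectedComponentIn U x) ⊆ Uᶜ := by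
  rintro z ⟨hz, hzD⟩ hzU
  rw [hU.connectedComponentIn.interior_eq] at hzD
  obtain ⟨w, hwz, hwx⟩ :=
    mem_closure_iff_nhds.mp hz _ (connectedComponentIn_mem_nhds (hU.mem_nhds hzU))
  exact hzD
    (connectedComponentIn_eq hwx ▸ connectedComponentIn_eq hwz ▸ mem_connectedComponentIn hzU)

theorem connectedComponentIn_compl_inter_nonempty_or [LocallyConnectedSpace X]
    [PreconnectedSpace X] {J J' : Set X} (hJ : IsClosed J) (hJ' : IsClosed J')
    (hdisj : Disjoint J J') (hJne : J.Nonempty) {x : X} (hxJ : x ∉ J) (hxJ' : x ∉ J') :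
    (connectedComponentIn Jᶜ x ∩ J').Nonempty ∨ (connectedComponentIn J'ᶜ x ∩ J).Nonempty := by
  by_contra! h
  set D := connectedComponentIn Jᶜ x
  have hD : D = connectedComponentIn J'ᶜ x :=
    (isPreconnected_connectedComponentIn.subset_connectedComponentIn
      (mem_connectedComponentIn hxJ) (subset_compl_iff_disjoint_right.2
        (disjoint_iff_inter_eq_empty.2 h.1))).antisymm
    (isPreconnected_connectedComponentIn.subset_connectedComponentIn
      (mem_connectedComponentIn hxJ') (subset_compl_iff_disjoint_right.2
        (disjoint_iff_inter_eq_empty.2 h.2)))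
  have hfr : frontier D = ∅ := by
    have h₁ := frontier_connectedComponentIn_subset_compl hJ.isOpen_compl x
    have h₂ := frontier_connectedComponentIn_subset_compl hJ'.isOpen_compl x
    rw [compl_compl] at h₁ h₂
    rw [← hD] at h₂
    exact subset_empty_iff.1 ((subset_inter h₁ h₂).trans hdisj.inter_eq.subset)
  obtain ⟨y, hy⟩ := hJne
  rcases frontier_eq_empty_iff.1 hfr with hD₀ | hD₁
  · exact (hD₀ ▸ mem_connectedComponentIn hxJ : x ∈ (∅ : Set X))
  · exact connectedComponentIn_subset _ _ (hD₁ ▸ mem_univ y : y ∈ D) hy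

theorem isOpen_iUnion_of_subset_interior_succ {R : ℕ → Set X}
    (h : ∀ m, R m ⊆ interior (R (m + 1))) : IsOpen (⋃ m, R m) := by
  have : ⋃ m, R m = ⋃ m, interior (R (m + 1)) :=
    (iUnion_mono h).antisymm (iUnion_subset fun m => interior_subset.trans (subset_iUnion R _))
  exact this ▸ isOpen_iUnion fun _ => isOpen_interior

theorem inter_nonempty_of_interior_closure_inter_closure {U₁ U₂ : Set X} (hU₂ : IsOpen U₂)
    (h : (interior (closure U₁) ∩ closure U₂).Nonempty) :
    (U₁ ∩ U₂).Nonempty := by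
  obtain ⟨y, hy₁, hy₂⟩ := closure_nonempty_iff.1 (h.mono isOpen_interior.inter_closure)
  have hy : (U₂ ∩ closure U₁).Nonempty := ⟨y, hy₂, interior_subset hy₁⟩
  obtain ⟨z, hz₂, hz₁⟩ := closure_nonempty_iff.1 (hy.mono hU₂.inter_closure)
  exact ⟨z, hz₁, hz₂⟩

theorem IsClosed.inter_eq_frontier_inter_frontier_iff {S₁ S₂ : Set X} (h₁ : IsClosed S₁)
    (h₂ : IsClosed S₂) :
    S₁ ∩ S₂ = frontier S₁ ∩ frontier S₂ ↔
      Disjoint (interior S₁) S₂ ∧ Disjoint S₁ (interior S₂) := by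
  have h₁' : interior S₁ ⊆ S₁ := interior_subset
  have h₂' : interior S₂ ⊆ S₂ := interior_subset
  rw [h₁.frontier_eq, h₂.frontier_eq]
  simp only [Set.ext_iff, disjoint_left, mem_inter_iff, Set.mem_sdiff, subset_def] at *
  grind

end Topology

theorem exists_not_isBounded_connectedComponentIn_compl {F : Type*} [NormedAddCommGroup F]
    [NormedSpace ℝ F] [Nontrivial F] {A : Set F} (hA : IsBounded A) :
    ∃ x ∉ A, ¬ IsBounded (connectedComponentIn Aᶜ x) := by
  obtain ⟨r, hr⟩ := hA.subset_closedBall 0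
  obtain ⟨u, hu⟩ := exists_norm_eq F zero_le_one
  have hnorm : ∀ t ≥ |r| + 1, ‖t • u‖ = t := fun t ht => by
    rw [norm_smul, hu, mul_one, Real.norm_of_nonneg (by linarith [abs_nonneg r])]
  set ray := (fun t : ℝ => t • u) '' Ici (|r| + 1)
  have hray : ray ⊆ Aᶜ := by
    rintro _ ⟨t, ht, rfl⟩ htA
    have := mem_closedBall_zero_iff.1 (hr htA)
    rw [hnorm t ht] at this
    linarith [le_abs_self r, mem_Ici.1 ht]
  have hunb : ¬ IsBounded ray := by
    intro hb
    obtain ⟨C, hC⟩ := isBounded_iff_forall_norm_le.1 hb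
    have ht : max (|r| + 1) C + 1 ≥ |r| + 1 := by linarith [le_max_left (|r| + 1) C]
    have := hC _ ⟨_, ht, rfl⟩
    rw [hnorm _ ht] at this
    linarith [le_max_right (|r| + 1) C]
  have hx : (|r| + 1) • u ∈ ray := ⟨_, self_mem_Ici, rfl⟩
  refine ⟨_, hray hx, fun hb => hunb (hb.subset ?_)⟩
  exact (isPreconnected_Ici.image _ (continuous_id.smul continuous_const).continuousOn)
    |>.subset_connectedComponentIn hx hray

section Enclosure

variable {J J' : Set E2} {x y : E2}

theorem mem_encl_iff_of_notMem (hx : x ∉ J) :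
    x ∈ encl J ↔ IsBounded (connectedComponentIn Jᶜ x) := by
  simp [encl, hx]

theorem mem_encl_iff_of_mem_connectedComponentIn (hy : y ∈ connectedComponentIn Jᶜ x) :
    y ∈ encl J ↔ x ∈ encl J := by
  have hx : x ∉ J := connectedComponentIn_nonempty_iff.1 ⟨y, hy⟩
  rw [mem_encl_iff_of_notMem (connectedComponentIn_subset _ _ hy), mem_encl_iff_of_notMem hx,
    connectedComponentIn_eq hy]

theorem encl_mono (h : J ⊆ J') : encl J ⊆ encl J' := by
  intro x hx
  by_cases hxJ' : x ∈ J'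
  · exact Or.inl hxJ'
  have hxJ : x ∉ J := fun hxJ => hxJ' (h hxJ)
  rw [mem_encl_iff_of_notMem hxJ] at hx
  exact (mem_encl_iff_of_notMem hxJ').2
    (hx.subset (connectedComponentIn_mono x (compl_subset_compl.2 h)))

theorem isClosed_encl (hJ : IsClosed J) : IsClosed (encl J) := by
  refine isOpen_compl_iff.1 (isOpen_iff_forall_mem_open.2 fun x hx => ?_)
  have hxJ : x ∉ J := fun h => hx (Or.inl h)
  refine ⟨connectedComponentIn Jᶜ x, fun y hy hyJ => hx ?_, hJ.isOpen_compl.connectedComponentIn,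
    mem_connectedComponentIn hxJ⟩
  exact (mem_encl_iff_of_mem_connectedComponentIn hy).1 hyJ

theorem encl_diff_subset_interior_encl (hJ : IsClosed J) : encl J \ J ⊆ interior (encl J) := by
  rintro x ⟨hx, hxJ⟩
  refine mem_interior.2 ⟨connectedComponentIn Jᶜ x, fun y hy => ?_,
    hJ.isOpen_compl.connectedComponentIn, mem_connectedComponentIn hxJ⟩
  exact (mem_encl_iff_of_mem_connectedComponentIn hy).2 hx

theorem IsPreconnected.subset_encl_or_disjoint (hJ' : IsPreconnected J') (hdisj : Disjoint J J') :
    J' ⊆ encl J ∨ Disjoint J' (encl J) := by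
  refine or_iff_not_imp_right.2 fun h => ?_
  obtain ⟨z, hzJ', hz⟩ := not_disjoint_iff.1 h
  intro w hw
  have hsub := hJ'.subset_connectedComponentIn hzJ' hdisj.symm.subset_compl_right
  exact (mem_encl_iff_of_mem_connectedComponentIn (hsub hw)).2 hz

theorem exists_mem_iff_mem_encl (hJ : IsClosed J) (hJ' : IsClosed J') (hdisj : Disjoint J J')
    (hJne : J.Nonempty) (hJ'J : Disjoint J (encl J')) (hx : x ∈ encl J') (hxJ' : x ∉ J') :
    ∃ z ∈ J', (z ∈ encl J ↔ x ∈ encl J) := by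
  have hxJ : x ∉ J := fun h => hJ'J.notMem_of_mem_left h hx
  rcases connectedComponentIn_compl_inter_nonempty_or hJ hJ' hdisj hJne hxJ hxJ' with
    ⟨z, hz, hzJ'⟩ | ⟨z, hz, hzJ⟩
  · exact ⟨z, hzJ', mem_encl_iff_of_mem_connectedComponentIn hz⟩
  · exact (hJ'J.notMem_of_mem_left hzJ ((mem_encl_iff_of_mem_connectedComponentIn hz).2 hx)).elim

theorem encl_subset_interior_encl (hJ : IsClosed J) (hJ' : IsClosed J') (hdisj : Disjoint J J')
    (hJne : J.Nonempty) (hJ'J : J' ⊆ encl J) (hJJ' : Disjoint J (encl J')) :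
    encl J' ⊆ interior (encl J) := by
  intro x hx
  refine encl_diff_subset_interior_encl hJ ⟨?_, fun h => hJJ'.notMem_of_mem_left h hx⟩
  by_cases hxJ' : x ∈ J'
  · exact hJ'J hxJ'
  obtain ⟨z, hzJ', hz⟩ := exists_mem_iff_mem_encl hJ hJ' hdisj hJne hJJ' hx hxJ'
  exact hz.1 (hJ'J hzJ')

theorem disjoint_encl (hJ : IsClosed J) (hJ' : IsClosed J') (hdisj : Disjoint J J')
    (hJne : J.Nonempty) (hJ'J : Disjoint J' (encl J)) (hJJ' : Disjoint J (encl J')) :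
    Disjoint (encl J) (encl J') := by
  refine disjoint_left.2 fun x hx hx' => ?_
  obtain ⟨z, hzJ', hz⟩ := exists_mem_iff_mem_encl hJ hJ' hdisj hJne hJJ' hx'
    (fun h => hJ'J.notMem_of_mem_left h hx)
  exact hJ'J.notMem_of_mem_left hzJ' (hz.2 hx)

theorem not_subset_encl_and_subset_encl (hJ : IsClosed J) (hJ' : IsClosed J')
    (hb : IsBounded (J ∪ J')) (hdisj : Disjoint J J') (hJne : J.Nonempty) :
    ¬ (J' ⊆ encl J ∧ J ⊆ encl J') := by
  rintro ⟨hJ'J, hJJ'⟩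
  obtain ⟨p, hp, hpb⟩ := exists_not_isBounded_connectedComponentIn_compl hb
  have hpU : p ∉ encl (J ∪ J') := fun h => hpb ((mem_encl_iff_of_notMem hp).1 h)
  have hpJ : p ∉ encl J := fun h => hpU (encl_mono subset_union_left h)
  have hpJ' : p ∉ encl J' := fun h => hpU (encl_mono subset_union_right h)
  rcases connectedComponentIn_compl_inter_nonempty_or hJ hJ' hdisj hJne
    (fun h => hp (Or.inl h)) (fun h => hp (Or.inr h)) with ⟨z, hz, hzJ'⟩ | ⟨z, hz, hzJ⟩
  · exact hpJ ((mem_encl_iff_of_mem_connectedComponentIn hz).1 (hJ'J hzJ'))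
  · exact hpJ' ((mem_encl_iff_of_mem_connectedComponentIn hz).1 (hJJ' hzJ))

theorem encl_trichotomy (hJ : IsClosed J) (hJ' : IsClosed J') (hb : IsBounded (J ∪ J'))
    (hJc : IsPreconnected J) (hJ'c : IsPreconnected J') (hJne : J.Nonempty) (hJ'ne : J'.Nonempty)
    (hdisj : Disjoint J J') :
    Disjoint (encl J) (encl J') ∨ encl J' ⊆ interior (encl J) ∨ encl J ⊆ interior (encl J') := by
  rcases hJ'c.subset_encl_or_disjoint hdisj with hJ'J | hJ'J <;>
    rcases hJc.subset_encl_or_disjoint hdisj.symm with hJJ' | hJJ'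
  · exact (not_subset_encl_and_subset_encl hJ hJ' hb hdisj hJne ⟨hJ'J, hJJ'⟩).elim
  · exact Or.inr (Or.inl (encl_subset_interior_encl hJ hJ' hdisj hJne hJ'J hJJ'))
  · exact Or.inr (Or.inr (encl_subset_interior_encl hJ' hJ hdisj.symm hJ'ne hJJ' hJ'J))
  · exact Or.inl (disjoint_encl hJ hJ' hdisj hJne hJ'J hJJ')

end Enclosure

section Orbits

variable {V : E2 → E2} {K : NNReal} {ξ ζ : ℝ → E2}

theorem IsOrbit.continuous (hξ : IsOrbit V ξ) : Continuous ξ :=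
  continuous_iff_continuousAt.2 fun t => (hξ t).continuousAt

theorem IsOrbit.comp_add_const (hξ : IsOrbit V ξ) (c : ℝ) : IsOrbit V (fun t => ξ (t + c)) :=
  fun t => (hξ (t + c)).comp_add_const t c

theorem IsOrbit.eq_of_apply_eq (hLip : LipschitzWith K V) (hξ : IsOrbit V ξ) (hζ : IsOrbit V ζ)
    {t₀ : ℝ} (h : ξ t₀ = ζ t₀) : ξ = ζ :=
  ODE_solution_unique_univ (v := fun _ => V) (s := fun _ => univ)
    (fun _ => hLip.lipschitzOnWith) (fun t => ⟨hξ t, mem_univ _⟩) (fun t => ⟨hζ t, mem_univ _⟩) h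

theorem IsOrbit.range_eq_of_not_disjoint (hLip : LipschitzWith K V) (hξ : IsOrbit V ξ)
    (hζ : IsOrbit V ζ) (h : ¬ Disjoint (range ξ) (range ζ)) : range ξ = range ζ := by
  obtain ⟨_, ⟨a, rfl⟩, ⟨b, hb⟩⟩ := not_disjoint_iff.1 h
  have hshift : ξ = fun t => ζ (t + (b - a)) :=
    hξ.eq_of_apply_eq hLip (hζ.comp_add_const _) (t₀ := a) (by simp [hb])
  rw [hshift]
  exact (Equiv.addRight (b - a)).surjective.range_comp ζ

theorem IsClosedOrbit.isCompact_range (hLip : LipschitzWith K V) (hξ : IsClosedOrbit V ξ) :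
    IsCompact (range ξ) := by
  obtain ⟨T, hT, hξT⟩ := hξ.2
  have hper : Function.Periodic ξ T :=
    congrFun ((hξ.1.comp_add_const T).eq_of_apply_eq hLip hξ.1 (t₀ := 0) (by simpa using hξT))
  rw [← hper.image_Icc hT 0]
  exact isCompact_Icc.image hξ.1.continuous

theorem IsClosedOrbit.isClosed_encl (hLip : LipschitzWith K V) (hξ : IsClosedOrbit V ξ) :
    IsClosed (encl (range ξ)) :=
  _root_.isClosed_encl (hξ.isCompact_range hLip).isClosed

theorem IsClosedOrbit.range_eq_or_encl_trichotomy (hLip : LipschitzWith K V)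
    (hξ : IsClosedOrbit V ξ) (hζ : IsClosedOrbit V ζ) :
    range ξ = range ζ ∨ Disjoint (encl (range ξ)) (encl (range ζ)) ∨
      encl (range ζ) ⊆ interior (encl (range ξ)) ∨ encl (range ξ) ⊆ interior (encl (range ζ)) := by
  refine or_iff_not_imp_left.2 fun hne => encl_trichotomy (hξ.isCompact_range hLip).isClosed
    (hζ.isCompact_range hLip).isClosed
    ((hξ.isCompact_range hLip).union (hζ.isCompact_range hLip)).isBounded
    (isPreconnected_range hξ.1.continuous) (isPreconnected_range hζ.1.continuous)
    (range_nonempty ξ) (range_nonempty ζ) ?_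
  exact not_not.1 fun h => hne (hξ.1.range_eq_of_not_disjoint hLip hζ.1 h)

theorem IsClosedOrbit.encl_subset_or_subset (hLip : LipschitzWith K V) (hξ : IsClosedOrbit V ξ)
    (hζ : IsClosedOrbit V ζ) (h : ¬ Disjoint (encl (range ξ)) (encl (range ζ))) :
    encl (range ξ) ⊆ encl (range ζ) ∨ encl (range ζ) ⊆ encl (range ξ) := by
  rcases hξ.range_eq_or_encl_trichotomy hLip hζ with heq | hd | hsub | hsub
  · exact Or.inl (heq ▸ subset_rfl)
  · exact (h hd).elim
  · exact Or.inr (hsub.trans interior_subset)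
  · exact Or.inl (hsub.trans interior_subset)

theorem IsClosedOrbit.encl_subset_interior_of_ssubset (hLip : LipschitzWith K V)
    (hξ : IsClosedOrbit V ξ) (hζ : IsClosedOrbit V ζ) (h : encl (range ξ) ⊂ encl (range ζ)) :
    encl (range ξ) ⊆ interior (encl (range ζ)) := by
  rcases hξ.range_eq_or_encl_trichotomy hLip hζ with heq | hd | hsub | hsub
  · exact (h.ne (heq ▸ rfl)).elim
  · obtain ⟨y, hy⟩ := range_nonempty ξ
    exact (hd.notMem_of_mem_left (Or.inl hy) (h.subset (Or.inl hy))).elim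
  · exact (h.not_subset (hsub.trans interior_subset)).elim
  · exact hsub

end Orbits

section Cells

variable {V : E2 → E2} {K : NNReal} {S S₁ S₂ : Set E2}

theorem IsCell.nonempty (h : IsCell V S) : S.Nonempty := by
  obtain ⟨hS, -, -, -, -, p, hp, -⟩ := h
  exact ⟨p, hS.frontier_subset hp⟩

theorem IsCell.exists_chain (hLip : LipschitzWith K V) (h : IsCell V S) :
    ∃ ξ : ℕ → ℝ → E2, (∀ m, IsClosedOrbit V (ξ m)) ∧
      Monotone (fun m => encl (range (ξ m))) ∧
      (∀ m, encl (range (ξ m)) ⊆ interior (encl (range (ξ (m + 1))))) ∧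
      S = closure (⋃ m, encl (range (ξ m))) := by
  obtain ⟨-, ξ, hξ, hchain, rfl, -⟩ := h
  exact ⟨ξ, hξ, monotone_nat_of_le_succ fun m => (hchain m).subset,
    fun m => (hξ m).encl_subset_interior_of_ssubset hLip (hξ (m + 1)) (hchain m), rfl⟩

theorem IsCell.exists_closedOrbit_of_interior_inter (hLip : LipschitzWith K V)
    (h₁ : IsCell V S₁) (h₂ : IsCell V S₂) (hne : S₁ ≠ S₂) (hx : (interior S₁ ∩ S₂).Nonempty) :
    ∃ ξ : ℝ → E2, IsClosedOrbit V ξ ∧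
      ((S₁ ⊆ encl (range ξ) ∧ encl (range ξ) ⊆ interior S₂) ∨
       (S₂ ⊆ encl (range ξ) ∧ encl (range ξ) ⊆ interior S₁)) := by
  obtain ⟨ξ₁, hξ₁, hmono₁, hint₁, rfl⟩ := h₁.exists_chain hLip
  obtain ⟨ξ₂, hξ₂, hmono₂, hint₂, rfl⟩ := h₂.exists_chain hLip
  set R₁ := fun k => encl (range (ξ₁ k))
  set R₂ := fun m => encl (range (ξ₂ m))
  have hR₁ : ∀ k, R₁ k ⊆ interior (closure (⋃ k, R₁ k)) := fun k =>
    (hint₁ k).trans (interior_mono ((subset_iUnion R₁ _).trans subset_closure))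
  have hR₂ : ∀ m, R₂ m ⊆ interior (closure (⋃ m, R₂ m)) := fun m =>
    (hint₂ m).trans (interior_mono ((subset_iUnion R₂ _).trans subset_closure))
  obtain ⟨z, hz₁, hz₂⟩ :=
    inter_nonempty_of_interior_closure_inter_closure
      (isOpen_iUnion_of_subset_interior_succ hint₂) hx
  obtain ⟨k₀, hz₁⟩ := mem_iUnion.1 hz₁
  obtain ⟨m₀, hz₂⟩ := mem_iUnion.1 hz₂
  have hcomp : ∀ k ≥ k₀, ∀ m ≥ m₀, R₁ k ⊆ R₂ m ∨ R₂ m ⊆ R₁ k := fun k hk m hm =>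
    (hξ₁ k).encl_subset_or_subset hLip (hξ₂ m)
      (not_disjoint_iff.2 ⟨z, hmono₁ hk hz₁, hmono₂ hm hz₂⟩)
  by_cases hcof₂ : ∃ k, ∀ m, R₂ m ⊆ R₁ k
  · obtain ⟨k, hk⟩ := hcof₂
    exact ⟨ξ₁ k, hξ₁ k, Or.inr ⟨closure_minimal (iUnion_subset hk) ((hξ₁ k).isClosed_encl hLip),
      hR₁ k⟩⟩
  by_cases hcof₁ : ∃ m, ∀ k, R₁ k ⊆ R₂ m
  · obtain ⟨m, hm⟩ := hcof₁
    exact ⟨ξ₂ m, hξ₂ m, Or.inl ⟨closure_minimal (iUnion_subset hm) ((hξ₂ m).isClosed_encl hLip),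
      hR₂ m⟩⟩
  push Not at hcof₁ hcof₂
  refine (hne (congrArg closure (subset_antisymm ?_ ?_))).elim
  · exact iUnion_subset_iUnion_of_eventually_comparable hmono₁ hmono₂ hcomp hcof₂
  · exact iUnion_subset_iUnion_of_eventually_comparable hmono₂ hmono₁
      (fun m hm k hk => (hcomp k hk m hm).symm) hcof₁

end Cells

theorem statement11_general
    (V : E2 → E2) (K : NNReal) (hLip : LipschitzWith K V)
    (S₁ S₂ : Set E2) (h1 : IsCell V S₁) (h2 : IsCell V S₂) (hne : S₁ ≠ S₂) :
    Xor'
      (S₁ ∩ S₂ = frontier S₁ ∩ frontier S₂)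
      (∃ ξ : ℝ → E2, IsClosedOrbit V ξ ∧
        ((S₁ ⊆ encl (range ξ) ∧ encl (range ξ) ⊆ interior S₂) ∨
         (S₂ ⊆ encl (range ξ) ∧ encl (range ξ) ⊆ interior S₁))) := by
  refine xor_iff_iff_not.2 ?_
  rw [h1.1.inter_eq_frontier_inter_frontier_iff h2.1]
  constructor
  · rintro ⟨hd₁, hd₂⟩ ⟨ξ, -, ⟨hS₁, hR⟩ | ⟨hS₂, hR⟩⟩
    · exact h1.nonempty.ne_empty (hd₂.eq_bot_of_le (hS₁.trans hR))
    · exact h2.nonempty.ne_empty (hd₁.symm.eq_bot_of_le (hS₂.trans hR))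
  · refine not_imp_comm.1 fun hd => ?_
    rcases not_and_or.1 hd with hd₁ | hd₂
    · exact h1.exists_closedOrbit_of_interior_inter hLip h2 hne
        (not_disjoint_iff_nonempty_inter.1 hd₁)
    · obtain ⟨ξ, hξ, hc⟩ := h2.exists_closedOrbit_of_interior_inter hLip h1 hne.symm
        (inter_comm S₁ _ ▸ not_disjoint_iff_nonempty_inter.1 hd₂)
      exact ⟨ξ, hξ, hc.symm⟩

/-- Corollary 2.7. For two distinct cells `S₁, S₂`, exactly one holds:
(1) `S₁ ∩ S₂ = ∂S₁ ∩ ∂S₂`; (2) there is a closed orbit `ξ` with `S₁ ⊆ R_ξ ⊆ S₂°` or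
`S₂ ⊆ R_ξ ⊆ S₁°`. -/
theorem statement11
    (V : E2 → E2) (K : NNReal) (hLip : LipschitzWith K V) (hper : ZPeriodic V)
    (H : E2 → ℝ) (hH : IsStreamFunction V H)
    (M : ℝ) (hM : 0 < M) (hswirl : SwirlBound V M)
    (S₁ S₂ : Set E2) (h1 : IsCell V S₁) (h2 : IsCell V S₂) (hne : S₁ ≠ S₂) :
    Xor'
      (S₁ ∩ S₂ = frontier S₁ ∩ frontier S₂)
      (∃ ξ : ℝ → E2, IsClosedOrbit V ξ ∧
        ((S₁ ⊆ encl (range ξ) ∧ encl (range ξ) ⊆ interior S₂) ∨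
         (S₂ ⊆ encl (range ξ) ∧ encl (range ξ) ⊆ interior S₁))) :=
  statement11_general V K hLip S₁ S₂ h1 h2 hne

end
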